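/- arXiv:2602.14862 — 7 statements merged into one kernel-verified Lean document; each statement's English description precedes it below -/
import Mathlib

section
/- If there exist an index i and two labels y, y' with z_{i,y} ≠ z_{i,y'}, then the negative log-likelihood L(β) = −(1/n) Σ_{i=1}^n (β z_{i,y_i} − log Σ_k exp(β z_{i,k})) is strictly convex on ℝ; conversely, if for every i all coordinates of z_i are equal, then L is constant. -/
open Real Finset

/-- Strict Young / weighted AM-GM for two positive reals. -/
lemma young_strict {p q t s : ℝ} (hp : 0 < p) (hq : 0 < q) (hpq : p ≠ q)
    (ht : 0 < t) (hs : 0 < s) (hts : t + s = 1) :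
    p ^ t * q ^ s < t * p + s * q := by
  have h := strictConcaveOn_log_Ioi.2 (Set.mem_Ioi.2 hp) (Set.mem_Ioi.2 hq) hpq ht hs hts
  simp only [smul_eq_mul] at h
  have h2 : p ^ t * q ^ s = Real.exp (t * Real.log p + s * Real.log q) := by
    rw [Real.exp_add, Real.rpow_def_of_pos hp, Real.rpow_def_of_pos hq]
    ring_nf
  rw [h2]
  calc Real.exp (t * Real.log p + s * Real.log q)
      < Real.exp (Real.log (t * p + s * q)) := Real.exp_lt_exp.2 h
    _ = t * p + s * q := Real.exp_log (by positivity)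

/-- Convexity (and strict convexity under non-degeneracy) of log-sum-exp along a line. -/
lemma lse_aux {K : ℕ} (hK : 0 < K) (a : Fin K → ℝ) {x y t s : ℝ}
    (ht : 0 < t) (hs : 0 < s) (hts : t + s = 1) :
    Real.log (∑ k, Real.exp ((t * x + s * y) * a k))
      ≤ t * Real.log (∑ k, Real.exp (x * a k)) + s * Real.log (∑ k, Real.exp (y * a k)) ∧
    (x ≠ y → (∃ j k, a j ≠ a k) →
      Real.log (∑ k, Real.exp ((t * x + s * y) * a k))
        < t * Real.log (∑ k, Real.exp (x * a k)) + s * Real.log (∑ k, Real.exp (y * a k))) := by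
  haveI : Nonempty (Fin K) := Fin.pos_iff_nonempty.mp hK
  set U := ∑ k, Real.exp (x * a k) with hUdef
  set V := ∑ k, Real.exp (y * a k) with hVdef
  have hU : 0 < U := Finset.sum_pos (fun k _ => Real.exp_pos _) Finset.univ_nonempty
  have hV : 0 < V := Finset.sum_pos (fun k _ => Real.exp_pos _) Finset.univ_nonempty
  have hUt : 0 < U ^ t := Real.rpow_pos_of_pos hU t
  have hVs : 0 < V ^ s := Real.rpow_pos_of_pos hV s
  have hterm : ∀ k : Fin K, Real.exp ((t * x + s * y) * a k)
      = ((Real.exp (x * a k) / U) ^ t * (Real.exp (y * a k) / V) ^ s) * (U ^ t * V ^ s) := by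
    intro k
    rw [Real.div_rpow (Real.exp_pos _).le hU.le, Real.div_rpow (Real.exp_pos _).le hV.le,
        Real.rpow_def_of_pos (Real.exp_pos _), Real.rpow_def_of_pos (Real.exp_pos _),
        Real.log_exp, Real.log_exp]
    have h1 : Real.exp ((t * x + s * y) * a k)
        = Real.exp (t * (x * a k)) * Real.exp (s * (y * a k)) := by
      rw [← Real.exp_add]; congr 1; ring
    rw [h1]
    field_simp
  have hle : ∀ k : Fin K, Real.exp ((t * x + s * y) * a k)
      ≤ (t * (Real.exp (x * a k) / U) + s * (Real.exp (y * a k) / V)) * (U ^ t * V ^ s) := by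
    intro k
    rw [hterm k]
    refine mul_le_mul_of_nonneg_right ?_ (by positivity)
    exact Real.geom_mean_le_arith_mean2_weighted ht.le hs.le (by positivity) (by positivity) hts
  have hsum_eq : ∑ k : Fin K,
      (t * (Real.exp (x * a k) / U) + s * (Real.exp (y * a k) / V)) * (U ^ t * V ^ s)
      = U ^ t * V ^ s := by
    rw [← Finset.sum_mul]
    have h1 : ∑ k : Fin K, (t * (Real.exp (x * a k) / U) + s * (Real.exp (y * a k) / V)) = 1 := by
      rw [Finset.sum_add_distrib, ← Finset.mul_sum, ← Finset.mul_sum, ← Finset.sum_div,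
          ← Finset.sum_div, ← hUdef, ← hVdef, div_self hU.ne', div_self hV.ne', mul_one, mul_one,
          hts]
    rw [h1, one_mul]
  have hSpos : 0 < ∑ k, Real.exp ((t * x + s * y) * a k) :=
    Finset.sum_pos (fun k _ => Real.exp_pos _) Finset.univ_nonempty
  have hlogUV : Real.log (U ^ t * V ^ s) = t * Real.log U + s * Real.log V := by
    rw [Real.log_mul hUt.ne' hVs.ne', Real.log_rpow hU, Real.log_rpow hV]
  constructor
  · have hsle : ∑ k, Real.exp ((t * x + s * y) * a k) ≤ U ^ t * V ^ s := by
      calc ∑ k, Real.exp ((t * x + s * y) * a k)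
          ≤ ∑ k : Fin K, (t * (Real.exp (x * a k) / U) + s * (Real.exp (y * a k) / V))
              * (U ^ t * V ^ s) := Finset.sum_le_sum fun k _ => hle k
        _ = U ^ t * V ^ s := hsum_eq
    calc Real.log (∑ k, Real.exp ((t * x + s * y) * a k))
        ≤ Real.log (U ^ t * V ^ s) := Real.log_le_log hSpos hsle
      _ = t * Real.log U + s * Real.log V := hlogUV
  · intro hxy ha
    have hne : ∃ k : Fin K, Real.exp (x * a k) / U ≠ Real.exp (y * a k) / V := by
      by_contra h
      push_neg at h
      obtain ⟨j, k, hjk⟩ := ha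
      have e1 : Real.exp (x * a j) * V = Real.exp (y * a j) * U :=
        (div_eq_div_iff hU.ne' hV.ne').1 (h j)
      have e2 : Real.exp (x * a k) * V = Real.exp (y * a k) * U :=
        (div_eq_div_iff hU.ne' hV.ne').1 (h k)
      have e3 : Real.exp (x * a j) * Real.exp (y * a k) * (U * V)
          = Real.exp (y * a j) * Real.exp (x * a k) * (U * V) := by
        calc Real.exp (x * a j) * Real.exp (y * a k) * (U * V)
            = (Real.exp (x * a j) * V) * (Real.exp (y * a k) * U) := by ring
          _ = (Real.exp (y * a j) * U) * (Real.exp (x * a k) * V) := by rw [e1, ← e2]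
          _ = Real.exp (y * a j) * Real.exp (x * a k) * (U * V) := by ring
      have e4 : Real.exp (x * a j) * Real.exp (y * a k)
          = Real.exp (y * a j) * Real.exp (x * a k) :=
        mul_right_cancel₀ (by positivity) e3
      rw [← Real.exp_add, ← Real.exp_add] at e4
      have e5 : x * a j + y * a k = y * a j + x * a k := Real.exp_injective e4
      have e6 : (x - y) * (a j - a k) = 0 := by linear_combination e5
      rcases mul_eq_zero.1 e6 with h' | h'
      · exact hxy (sub_eq_zero.1 h')
      · exact hjk (sub_eq_zero.1 h')
    obtain ⟨k₀, hk₀⟩ := hne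
    have hslt : ∑ k, Real.exp ((t * x + s * y) * a k) < U ^ t * V ^ s := by
      calc ∑ k, Real.exp ((t * x + s * y) * a k)
          < ∑ k : Fin K, (t * (Real.exp (x * a k) / U) + s * (Real.exp (y * a k) / V))
              * (U ^ t * V ^ s) := by
            refine Finset.sum_lt_sum (fun k _ => hle k) ⟨k₀, Finset.mem_univ _, ?_⟩
            rw [hterm k₀]
            exact mul_lt_mul_of_pos_right
              (young_strict (by positivity) (by positivity) hk₀ ht hs hts) (by positivity)
        _ = U ^ t * V ^ s := hsum_eq
    calc Real.log (∑ k, Real.exp ((t * x + s * y) * a k))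
        < Real.log (U ^ t * V ^ s) := Real.log_lt_log hSpos hslt
      _ = t * Real.log U + s * Real.log V := hlogUV

theorem nll_strictConvex_or_constant {n K : ℕ} (hn : 1 ≤ n) (hK : 2 ≤ K)
    (z : Fin n → Fin K → ℝ) (y : Fin n → Fin K) :
    ((∃ i : Fin n, ∃ a b : Fin K, z i a ≠ z i b) →
      StrictConvexOn ℝ Set.univ (fun β : ℝ =>
        -(1 / (n : ℝ)) * ∑ i, (β * z i (y i) - Real.log (∑ k, Real.exp (β * z i k)))))
    ∧ ((∀ i : Fin n, ∀ a b : Fin K, z i a = z i b) →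
      ∀ β₁ β₂ : ℝ,
        -(1 / (n : ℝ)) * ∑ i, (β₁ * z i (y i) - Real.log (∑ k, Real.exp (β₁ * z i k)))
        = -(1 / (n : ℝ)) * ∑ i, (β₂ * z i (y i) - Real.log (∑ k, Real.exp (β₂ * z i k)))) := by
  have hK0 : 0 < K := lt_of_lt_of_le two_pos hK
  have hn0 : (0 : ℝ) < (n : ℝ) := by exact_mod_cast hn
  constructor
  · rintro ⟨i₀, a, b, hab⟩
    refine ⟨convex_univ, ?_⟩
    intro p _ q _ hpq t s ht hs hts
    simp only [smul_eq_mul]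
    have hle : ∀ i : Fin n,
        t * (p * z i (y i) - Real.log (∑ k, Real.exp (p * z i k)))
          + s * (q * z i (y i) - Real.log (∑ k, Real.exp (q * z i k)))
        ≤ (t * p + s * q) * z i (y i) - Real.log (∑ k, Real.exp ((t * p + s * q) * z i k)) := by
      intro i
      have h := (lse_aux hK0 (z i) ht hs hts (x := p) (y := q)).1
      nlinarith [h]
    have hlt :
        t * (p * z i₀ (y i₀) - Real.log (∑ k, Real.exp (p * z i₀ k)))
          + s * (q * z i₀ (y i₀) - Real.log (∑ k, Real.exp (q * z i₀ k)))
        < (t * p + s * q) * z i₀ (y i₀)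
            - Real.log (∑ k, Real.exp ((t * p + s * q) * z i₀ k)) := by
      have h := (lse_aux hK0 (z i₀) ht hs hts (x := p) (y := q)).2 hpq ⟨a, b, hab⟩
      nlinarith [h]
    have key : ∑ i, (t * (p * z i (y i) - Real.log (∑ k, Real.exp (p * z i k)))
          + s * (q * z i (y i) - Real.log (∑ k, Real.exp (q * z i k))))
        < ∑ i, ((t * p + s * q) * z i (y i)
            - Real.log (∑ k, Real.exp ((t * p + s * q) * z i k))) :=
      Finset.sum_lt_sum (fun i _ => hle i) ⟨i₀, Finset.mem_univ _, hlt⟩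
    rw [Finset.sum_add_distrib, ← Finset.mul_sum, ← Finset.mul_sum] at key
    have hpos : (0 : ℝ) < 1 / (n : ℝ) := by positivity
    nlinarith [mul_lt_mul_of_pos_left key hpos]
  · intro h β₁ β₂
    have hconst : ∀ β : ℝ,
        ∑ i, (β * z i (y i) - Real.log (∑ k, Real.exp (β * z i k)))
          = ∑ i : Fin n, (-Real.log K) := by
      intro β
      refine Finset.sum_congr rfl fun i _ => ?_
      have hz : ∀ k, z i k = z i (y i) := fun k => h i k (y i)
      have hsum : ∑ k, Real.exp (β * z i k) = (K : ℝ) * Real.exp (β * z i (y i)) := by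
        rw [Finset.sum_congr rfl fun k _ => by rw [hz k]]
        simp [Finset.sum_const, Finset.card_univ, nsmul_eq_mul]
      rw [hsum, Real.log_mul (by positivity) (Real.exp_ne_zero _), Real.log_exp]
      ring
    rw [hconst β₁, hconst β₂]
end

section
/- If every prediction is correct in the strict sense that z_{i,y_i} > z_{i,k} for all k ≠ y_i, and at least one z_i is not constant, then the negative log-likelihood L(β) is strictly decreasing in β on ℝ (so it has no minimiser on (0, ∞)). -/
open Real Finset

theorem nll_strictAnti_of_perfect_accuracy {n K : ℕ} (hn : 1 ≤ n) (hK : 2 ≤ K)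
    (z : Fin n → Fin K → ℝ) (y : Fin n → Fin K)
    (hcorrect : ∀ i : Fin n, ∀ k : Fin K, k ≠ y i → z i k < z i (y i))
    (hnonconst : ∃ i : Fin n, ∃ a b : Fin K, z i a ≠ z i b) :
    StrictAnti (fun β : ℝ =>
      -(1 / (n : ℝ)) * ∑ i, (β * z i (y i) - Real.log (∑ k, Real.exp (β * z i k)))) := by
  have hn' : (0:ℝ) < n := by
    have : 0 < n := lt_of_lt_of_le Nat.zero_lt_one hn
    exact_mod_cast this
  intro β1 β2 hβ
  simp only
  have hneg : -(1 / (n:ℝ)) < 0 := by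
    have : (0:ℝ) < 1 / n := by positivity
    linarith
  -- key: decompose log-sum-exp
  have decomp : ∀ (β : ℝ) (i : Fin n),
      β * z i (y i) - Real.log (∑ k, Real.exp (β * z i k))
        = - Real.log (∑ k, Real.exp (β * (z i k - z i (y i)))) := by
    intro β i
    have hsum : (∑ k, Real.exp (β * z i k))
        = Real.exp (β * z i (y i)) * ∑ k, Real.exp (β * (z i k - z i (y i))) := by
      rw [Finset.mul_sum]
      refine Finset.sum_congr rfl fun k _ => ?_
      rw [← Real.exp_add]; ring_nf
    have hpos : (0:ℝ) < ∑ k, Real.exp (β * (z i k - z i (y i))) :=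
      Finset.sum_pos (fun k _ => Real.exp_pos _) ⟨y i, Finset.mem_univ _⟩
    rw [hsum, Real.log_mul (ne_of_gt (Real.exp_pos _)) (ne_of_gt hpos), Real.log_exp]
    ring
  have key : ∀ i : Fin n,
      β1 * z i (y i) - Real.log (∑ k, Real.exp (β1 * z i k))
      < β2 * z i (y i) - Real.log (∑ k, Real.exp (β2 * z i k)) := by
    intro i
    rw [decomp β1 i, decomp β2 i]
    have hpos2 : (0:ℝ) < ∑ k, Real.exp (β2 * (z i k - z i (y i))) :=
      Finset.sum_pos (fun k _ => Real.exp_pos _) ⟨y i, Finset.mem_univ _⟩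
    have hlt : (∑ k, Real.exp (β2 * (z i k - z i (y i))))
        < ∑ k, Real.exp (β1 * (z i k - z i (y i))) := by
      obtain ⟨k0, hk0⟩ := Fintype.exists_ne_of_one_lt_card
        (by simpa using (by omega : 1 < K)) (y i)
      refine Finset.sum_lt_sum (fun k _ => ?_) ⟨k0, Finset.mem_univ _, ?_⟩
      · by_cases hk : k = y i
        · subst hk; simp
        · have hc : z i k - z i (y i) < 0 := by
            have := hcorrect i k hk; linarith
          exact Real.exp_le_exp.2 (by nlinarith)
      · have hc : z i k0 - z i (y i) < 0 := by
          have := hcorrect i k0 hk0; linarith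
        exact Real.exp_lt_exp.2 (by nlinarith)
    have := Real.log_lt_log hpos2 hlt
    linarith
  have hsumlt : (∑ i, (β1 * z i (y i) - Real.log (∑ k, Real.exp (β1 * z i k))))
      < ∑ i, (β2 * z i (y i) - Real.log (∑ k, Real.exp (β2 * z i k))) := by
    refine Finset.sum_lt_sum (fun i _ => (key i).le) ?_
    have : (0:ℕ) < n := lt_of_lt_of_le Nat.zero_lt_one hn
    exact ⟨⟨0, this⟩, Finset.mem_univ _, key _⟩
  exact mul_lt_mul_of_neg_left hsumlt hneg
end

section
/- Let π ∈ Δ_K be a probability vector with all coordinates positive and let 0 < β₁ < β₂. Define π_β ∈ Δ_K by (π_β)_k = π_k^β / Σ_j π_j^β. Then for every convex function φ: ℝ → ℝ, Σ_{k=1}^K φ((π_{β₁})_k) ≤ Σ_{k=1}^K φ((π_{β₂})_k) (i.e., π_{β₂} majorises π_{β₁}). -/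
/-!
Passing from `β₁` to `β₂` multiplies the `k`-th weight by a factor proportional to
`p k ^ (β₂ - β₁)`, which increases with `p k`. So large coordinates grow and small ones shrink,
and there is a single level `s` such that each coordinate `a k` of `π_{β₁}` lies between `s` and
the coordinate `b k` of `π_{β₂}`. If `g` is a subgradient of `φ` at `s`, this gives
`φ (b k) - φ (a k) ≥ g * (b k - a k)` for every `k`, and summing over `k` proves the claim
because `∑ k, (b k - a k) = 0`.
-/

open Real Finset

namespace ConvexOn

variable {S : Set ℝ} {f : ℝ → ℝ} {a b s : ℝ}

lemma rightDeriv_mul_sub_le (hf : ConvexOn ℝ S f) (ha : a ∈ interior S) (hb : b ∈ S)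
    (hab : a ≤ b) : derivWithin f (Set.Ioi a) a * (b - a) ≤ f b - f a := by
  rcases hab.eq_or_lt with rfl | hab
  · simp
  have := hf.rightDeriv_le_slope_of_mem_interior ha hb hab
  rwa [slope_def_field, le_div_iff₀ (sub_pos.2 hab)] at this

lemma sub_le_rightDeriv_mul_sub (hf : ConvexOn ℝ S f) (ha : a ∈ S) (hb : b ∈ interior S)
    (hab : a ≤ b) : f b - f a ≤ derivWithin f (Set.Ioi b) b * (b - a) := by
  rcases hab.eq_or_lt with rfl | hab
  · simp
  have := (hf.slope_le_leftDeriv_of_mem_interior ha hb hab).trans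
    (hf.leftDeriv_le_rightDeriv_of_mem_interior hb)
  rwa [slope_def_field, div_le_iff₀ (sub_pos.2 hab)] at this

lemma rightDeriv_mul_sub_le_of_mem_uIcc (hf : ConvexOn ℝ S f) (hs : s ∈ interior S)
    (ha : a ∈ interior S) (hb : b ∈ S) (hsab : a ∈ Set.uIcc s b) :
    derivWithin f (Set.Ioi s) s * (b - a) ≤ f b - f a := by
  rcases Set.mem_uIcc.1 hsab with ⟨hsa, hab⟩ | ⟨hba, has⟩
  · calc derivWithin f (Set.Ioi s) s * (b - a)
        ≤ derivWithin f (Set.Ioi a) a * (b - a) :=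
          mul_le_mul_of_nonneg_right (hf.monotoneOn_rightDeriv hs ha hsa) (sub_nonneg.2 hab)
      _ ≤ f b - f a := hf.rightDeriv_mul_sub_le ha hb hab
  · have := (hf.sub_le_rightDeriv_mul_sub hb ha hba).trans
      (mul_le_mul_of_nonneg_right (hf.monotoneOn_rightDeriv ha hs has) (sub_nonneg.2 hba))
    linarith

lemma sum_le_sum_of_forall_mem_uIcc {ι : Type*} [Fintype ι] (hf : ConvexOn ℝ S f)
    {a b : ι → ℝ} (hs : s ∈ interior S) (ha : ∀ k, a k ∈ interior S) (hb : ∀ k, b k ∈ S)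
    (hsum : ∑ k, a k = ∑ k, b k) (hsab : ∀ k, a k ∈ Set.uIcc s (b k)) :
    ∑ k, f (a k) ≤ ∑ k, f (b k) := by
  have := Finset.sum_le_sum fun k (_ : k ∈ univ) ↦
    hf.rightDeriv_mul_sub_le_of_mem_uIcc hs (ha k) (hb k) (hsab k)
  rw [← Finset.mul_sum, Finset.sum_sub_distrib, Finset.sum_sub_distrib, hsum, sub_self,
    mul_zero] at this
  linarith

end ConvexOn

lemma rpow_div_mem_uIcc {x c S₁ S₂ β₁ β₂ : ℝ} (hx : 0 < x) (hc : 0 < c) (hS₁ : 0 < S₁)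
    (h1 : 0 ≤ β₁) (h12 : β₁ ≤ β₂) (hcS : c ^ (β₂ - β₁) = S₂ / S₁) :
    x ^ β₁ / S₁ ∈ Set.uIcc (c ^ β₁ / S₁) (x ^ β₂ / S₂) := by
  have hδ : 0 ≤ β₂ - β₁ := sub_nonneg.2 h12
  have hratio : x ^ β₂ / S₂ = x ^ β₁ / S₁ * (x / c) ^ (β₂ - β₁) := by
    have hS₂ : S₂ = c ^ (β₂ - β₁) * S₁ := by rw [hcS]; field_simp
    rw [div_rpow hx.le hc.le, hS₂, ← add_sub_cancel β₁ β₂, rpow_add hx, add_sub_cancel_left]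
    field_simp
  have ha : 0 ≤ x ^ β₁ / S₁ := by positivity
  rw [hratio, Set.mem_uIcc]
  rcases le_total c x with hcx | hxc
  · refine Or.inl ⟨by gcongr, le_mul_of_one_le_right ha (one_le_rpow ?_ hδ)⟩
    rwa [one_le_div hc]
  · refine Or.inr ⟨mul_le_of_le_one_right ha (rpow_le_one (by positivity) ?_ hδ), by gcongr⟩
    rwa [div_le_one hc]

section Temper

variable {ι : Type*} [Fintype ι] {p : ι → ℝ}

noncomputable def temper (p : ι → ℝ) (β : ℝ) (k : ι) : ℝ := p k ^ β / ∑ j, p j ^ β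

lemma sum_rpow_pos [Nonempty ι] (hp : ∀ k, 0 < p k) (β : ℝ) : 0 < ∑ j, p j ^ β :=
  Finset.sum_pos (fun j _ ↦ rpow_pos_of_pos (hp j) β) univ_nonempty

lemma sum_temper [Nonempty ι] (hp : ∀ k, 0 < p k) (β : ℝ) : ∑ k, temper p β k = 1 := by
  simp only [temper, ← Finset.sum_div, div_self (sum_rpow_pos hp β).ne']

lemma exists_forall_temper_mem_uIcc [Nonempty ι] (hp : ∀ k, 0 < p k) {β₁ β₂ : ℝ}
    (h1 : 0 ≤ β₁) (h12 : β₁ < β₂) : ∃ s, ∀ k, temper p β₁ k ∈ Set.uIcc s (temper p β₂ k) := by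
  have hS := div_pos (sum_rpow_pos hp β₂) (sum_rpow_pos hp β₁)
  exact ⟨_, fun k ↦ rpow_div_mem_uIcc (hp k) (rpow_pos_of_pos hS _) (sum_rpow_pos hp β₁) h1
    h12.le (rpow_inv_rpow hS.le (sub_pos.2 h12).ne')⟩

end Temper

theorem tempered_majorisation_general {K : ℕ} (p : Fin K → ℝ)
    (hpos : ∀ k, 0 < p k)
    (β₁ β₂ : ℝ) (h1 : 0 < β₁) (h12 : β₁ < β₂)
    (φ : ℝ → ℝ) (hφ : ConvexOn ℝ Set.univ φ) :
    ∑ k, φ (p k ^ β₁ / ∑ j, p j ^ β₁) ≤ ∑ k, φ (p k ^ β₂ / ∑ j, p j ^ β₂) := by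
  rcases isEmpty_or_nonempty (Fin K) with _ | _
  · simp
  obtain ⟨s, hs⟩ := exists_forall_temper_mem_uIcc hpos h1.le h12
  exact hφ.sum_le_sum_of_forall_mem_uIcc (a := temper p β₁) (b := temper p β₂)
    (by simp) (fun _ ↦ by simp) (fun _ ↦ trivial)
    ((sum_temper hpos β₁).trans (sum_temper hpos β₂).symm) hs

theorem tempered_majorisation {K : ℕ} (hK : 1 ≤ K) (p : Fin K → ℝ)
    (hpos : ∀ k, 0 < p k) (hsum : ∑ k, p k = 1)
    (β₁ β₂ : ℝ) (h1 : 0 < β₁) (h12 : β₁ < β₂)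
    (φ : ℝ → ℝ) (hφ : ConvexOn ℝ Set.univ φ) :
    ∑ k, φ (p k ^ β₁ / ∑ j, p j ^ β₁) ≤ ∑ k, φ (p k ^ β₂ / ∑ j, p j ^ β₂) :=
  tempered_majorisation_general p hpos β₁ β₂ h1 h12 φ hφ
end

section
/- Let π ∈ Δ_K have all positive coordinates and 0 < β₁ < β₂. Then the Shannon entropy satisfies H(π_{β₂}) ≤ H(π_{β₁}), where (π_β)_k = π_k^β / Σ_j π_j^β. -/
/-!
Write `Z β = ∑ₖ pₖ^β` and `W β = ∑ₖ pₖ^β log pₖ = Z' β`. Since `log (π_β)ₖ = β log pₖ - log Z β`,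
the entropy of `π_β` is `log Z β - β W β / Z β`, whose derivative is
`-β (Z β Z'' β - W β ^ 2) / Z β ^ 2 = -β Var_{π_β}(log p)`. By Cauchy–Schwarz the variance is
nonnegative, so the entropy is antitone in `β ≥ 0`.
-/

open Real Finset

noncomputable def tempered {ι : Type*} [Fintype ι] (p : ι → ℝ) (β : ℝ) (k : ι) : ℝ :=
  p k ^ β / ∑ j, p j ^ β

namespace tempered

variable {ι : Type*} [Fintype ι] {p : ι → ℝ}

theorem hasDerivAt_sum_rpow (hp : ∀ k, 0 < p k) (β : ℝ) :
    HasDerivAt (fun b => ∑ k, p k ^ b) (∑ k, p k ^ β * log (p k)) β :=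
  HasDerivAt.fun_sum fun k _ => (hasStrictDerivAt_const_rpow (hp k) β).hasDerivAt

theorem hasDerivAt_sum_rpow_mul_log (hp : ∀ k, 0 < p k) (β : ℝ) :
    HasDerivAt (fun b => ∑ k, p k ^ b * log (p k)) (∑ k, p k ^ β * log (p k) ^ 2) β :=
  HasDerivAt.fun_sum fun k _ =>
    ((hasStrictDerivAt_const_rpow (hp k) β).hasDerivAt.mul_const (log (p k))).congr_deriv
      (by ring)

theorem sq_sum_rpow_mul_log_le (hp : ∀ k, 0 < p k) (β : ℝ) :
    (∑ k, p k ^ β * log (p k)) ^ 2 ≤ (∑ k, p k ^ β) * ∑ k, p k ^ β * log (p k) ^ 2 :=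
  sum_sq_le_sum_mul_sum_of_sq_le_mul _ (fun k _ => (rpow_pos_of_pos (hp k) β).le)
    (fun k _ => mul_nonneg (rpow_pos_of_pos (hp k) β).le (sq_nonneg _))
    (fun k _ => le_of_eq (by ring))

theorem sum_rpow_pos [Nonempty ι] (hp : ∀ k, 0 < p k) (β : ℝ) : 0 < ∑ k, p k ^ β :=
  sum_pos (fun k _ => rpow_pos_of_pos (hp k) β) univ_nonempty

theorem sum_negMulLog [Nonempty ι] (hp : ∀ k, 0 < p k) (β : ℝ) :
    ∑ k, negMulLog (tempered p β k) =
      log (∑ k, p k ^ β) - β * ((∑ k, p k ^ β * log (p k)) / ∑ k, p k ^ β) := by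
  have hZ := sum_rpow_pos hp β
  have hterm : ∀ k, negMulLog (tempered p β k) = p k ^ β / (∑ j, p j ^ β) * log (∑ j, p j ^ β)
      - β * (p k ^ β * log (p k) / ∑ j, p j ^ β) := fun k => by
    rw [negMulLog, tempered, log_div (rpow_pos_of_pos (hp k) β).ne' hZ.ne', log_rpow (hp k)]
    ring
  simp only [hterm, sum_sub_distrib, ← sum_mul, ← mul_sum, ← sum_div, div_self hZ.ne', one_mul]

theorem hasDerivAt_sum_negMulLog [Nonempty ι] (hp : ∀ k, 0 < p k) (β : ℝ) :
    HasDerivAt (fun b => ∑ k, negMulLog (tempered p b k))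
      (-(β * (((∑ k, p k ^ β) * ∑ k, p k ^ β * log (p k) ^ 2 - (∑ k, p k ^ β * log (p k)) ^ 2)
        / (∑ k, p k ^ β) ^ 2))) β := by
  have hZ := (sum_rpow_pos hp β).ne'
  have hlog := (hasDerivAt_sum_rpow hp β).log hZ
  have hmean := (hasDerivAt_sum_rpow_mul_log hp β).fun_div (hasDerivAt_sum_rpow hp β) hZ
  rw [funext (sum_negMulLog hp)]
  exact (hlog.fun_sub ((hasDerivAt_id' β).fun_mul hmean)).congr_deriv (by field_simp; ring)

theorem antitoneOn_sum_negMulLog [Nonempty ι] (hp : ∀ k, 0 < p k) :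
    AntitoneOn (fun β => ∑ k, negMulLog (tempered p β k)) (Set.Ici 0) := by
  have hderiv := hasDerivAt_sum_negMulLog hp
  have hdiff : Differentiable ℝ (fun β => ∑ k, negMulLog (tempered p β k)) :=
    fun β => (hderiv β).differentiableAt
  refine antitoneOn_of_deriv_nonpos (convex_Ici 0) hdiff.continuous.continuousOn
    hdiff.differentiableOn fun β hβ => ?_
  rw [interior_Ici, Set.mem_Ioi] at hβ
  rw [(hderiv β).deriv, neg_nonpos]
  have hvar := sq_sum_rpow_mul_log_le hp β
  exact mul_nonneg hβ.le (div_nonneg (by linarith) (sq_nonneg _))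

end tempered

theorem tempered_entropy_antitone_general {K : ℕ} (hK : 1 ≤ K) (p : Fin K → ℝ)
    (hpos : ∀ k, 0 < p k)
    (β₁ β₂ : ℝ) (h1 : 0 < β₁) (h12 : β₁ < β₂) :
    -∑ k, (p k ^ β₂ / ∑ j, p j ^ β₂) * Real.log (p k ^ β₂ / ∑ j, p j ^ β₂)
      ≤ -∑ k, (p k ^ β₁ / ∑ j, p j ^ β₁) * Real.log (p k ^ β₁ / ∑ j, p j ^ β₁) := by
  have : Nonempty (Fin K) := Fin.pos_iff_nonempty.mp hK
  have h := tempered.antitoneOn_sum_negMulLog hpos (Set.mem_Ici.mpr h1.le)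
    (Set.mem_Ici.mpr (h1.trans h12).le) h12.le
  simpa only [tempered, negMulLog, neg_mul, sum_neg_distrib] using h

theorem tempered_entropy_antitone {K : ℕ} (hK : 1 ≤ K) (p : Fin K → ℝ)
    (hpos : ∀ k, 0 < p k) (hsum : ∑ k, p k = 1)
    (β₁ β₂ : ℝ) (h1 : 0 < β₁) (h12 : β₁ < β₂) :
    -∑ k, (p k ^ β₂ / ∑ j, p j ^ β₂) * Real.log (p k ^ β₂ / ∑ j, p j ^ β₂)
      ≤ -∑ k, (p k ^ β₁ / ∑ j, p j ^ β₁) * Real.log (p k ^ β₁ / ∑ j, p j ^ β₁) :=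
  tempered_entropy_antitone_general hK p hpos β₁ β₂ h1 h12
end

section
/- Let π ∈ Δ_K have all positive coordinates and 0 < β₁ < β₂. Then max_k (π_{β₁})_k ≤ max_k (π_{β₂})_k, where (π_β)_k = π_k^β / Σ_j π_j^β; i.e., the maximal probability is a nondecreasing function of β. -/
/-!
Let `k₀` be a coordinate where `p` is largest. For `β ≥ 0` every `p k ^ β` is at most `p k₀ ^ β`,
so the maximal tempered probability is `p k₀ ^ β / ∑ j, p j ^ β = (∑ j, (p j / p k₀) ^ β)⁻¹`.
Each ratio `p j / p k₀` lies in `(0, 1]`, so its powers decrease in `β`, and the maximum increases.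
-/

open Real Finset

variable {ι : Type*} [Fintype ι] {p : ι → ℝ} {k : ι}

lemma rpow_div_sum_rpow_eq_inv_sum_div_rpow (hp : ∀ j, 0 < p j) (β : ℝ) :
    p k ^ β / ∑ j, p j ^ β = (∑ j, (p j / p k) ^ β)⁻¹ := by
  simp_rw [div_rpow (hp _).le (hp k).le, ← sum_div]
  rw [inv_div]

lemma rpow_div_sum_rpow_mono_of_isMax (hp : ∀ j, 0 < p j) (hk : ∀ j, p j ≤ p k)
    {β₁ β₂ : ℝ} (h12 : β₁ ≤ β₂) :
    p k ^ β₁ / ∑ j, p j ^ β₁ ≤ p k ^ β₂ / ∑ j, p j ^ β₂ := by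
  simp_rw [rpow_div_sum_rpow_eq_inv_sum_div_rpow hp]
  have hpos : 0 < ∑ j, (p j / p k) ^ β₂ :=
    sum_pos (fun j _ => rpow_pos_of_pos (div_pos (hp j) (hp k)) _) ⟨k, mem_univ k⟩
  refine inv_anti₀ hpos (sum_le_sum fun j _ => ?_)
  exact rpow_le_rpow_of_exponent_ge (div_pos (hp j) (hp k))
    ((div_le_one (hp k)).2 (hk j)) h12

lemma sup'_rpow_div_sum_rpow_eq_of_isMax [Nonempty ι] (hp : ∀ j, 0 < p j)
    (hk : ∀ j, p j ≤ p k) {β : ℝ} (hβ : 0 ≤ β) :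
    univ.sup' univ_nonempty (fun i => p i ^ β / ∑ j, p j ^ β) = p k ^ β / ∑ j, p j ^ β := by
  have hS : 0 ≤ ∑ j, p j ^ β := sum_nonneg fun j _ => (rpow_pos_of_pos (hp j) β).le
  refine le_antisymm (sup'_le _ _ fun i _ => ?_)
    (le_sup' (fun i => p i ^ β / ∑ j, p j ^ β) (mem_univ k))
  exact div_le_div_of_nonneg_right (rpow_le_rpow (hp i).le (hk i) hβ) hS

theorem tempered_maxProb_monotone_general {K : ℕ} (p : Fin (K + 1) → ℝ)
    (hpos : ∀ k, 0 < p k)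
    (β₁ β₂ : ℝ) (h1 : 0 < β₁) (h12 : β₁ < β₂) :
    Finset.univ.sup' Finset.univ_nonempty (fun k => p k ^ β₁ / ∑ j, p j ^ β₁)
      ≤ Finset.univ.sup' Finset.univ_nonempty (fun k => p k ^ β₂ / ∑ j, p j ^ β₂) := by
  obtain ⟨k₀, -, hk₀⟩ := exists_max_image univ p univ_nonempty
  have hmax : ∀ j, p j ≤ p k₀ := fun j => hk₀ j (mem_univ j)
  rw [sup'_rpow_div_sum_rpow_eq_of_isMax hpos hmax h1.le,
    sup'_rpow_div_sum_rpow_eq_of_isMax hpos hmax (h1.trans h12).le]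
  exact rpow_div_sum_rpow_mono_of_isMax hpos hmax h12.le

theorem tempered_maxProb_monotone {K : ℕ} (p : Fin (K + 1) → ℝ)
    (hpos : ∀ k, 0 < p k) (hsum : ∑ k, p k = 1)
    (β₁ β₂ : ℝ) (h1 : 0 < β₁) (h12 : β₁ < β₂) :
    Finset.univ.sup' Finset.univ_nonempty (fun k => p k ^ β₁ / ∑ j, p j ^ β₁)
      ≤ Finset.univ.sup' Finset.univ_nonempty (fun k => p k ^ β₂ / ∑ j, p j ^ β₂) :=
  tempered_maxProb_monotone_general p hpos β₁ β₂ h1 h12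
end

section
/- Let p ∈ Δ_K have full support, let β⋆ ≥ 0, and let p_{β⋆} be the tempered distribution with coordinates p_k^{β⋆}/Σ_j p_j^{β⋆}. Then for any distribution q ∈ Δ_K with H(q) = H(p_{β⋆}), we have KL(p_{β⋆} ∥ p) ≤ KL(q ∥ p), where KL(q ∥ p) = Σ_k q_k log(q_k/p_k). I.e., the tempered distribution minimises the KL divergence to p among distributions with the same entropy. -/
open Real Finset

/-- Termwise bound: q - q*log(q/r) - r ≤ 0. -/
lemma gibbs_term_nonpos {q r : ℝ} (hq : 0 ≤ q) (hr : 0 < r) :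
    q - q * Real.log (q / r) - r ≤ 0 := by
  rcases eq_or_lt_of_le hq with h | h
  · simp [← h]; positivity
  · have hx : 0 < r / q := div_pos hr h
    have := Real.log_le_sub_one_of_pos hx
    have h2 : q * Real.log (r / q) ≤ q * (r / q - 1) := by
      exact mul_le_mul_of_nonneg_left this hq
    rw [Real.log_div hr.ne' h.ne'] at h2
    rw [Real.log_div (ne_of_gt h) hr.ne']
    have h3 : q * (r / q - 1) = r - q := by field_simp
    nlinarith [h2]

/-- Gibbs inequality: KL(q‖r) ≥ 0. -/
lemma gibbs_nonneg {K : ℕ} (q r : Fin K → ℝ) (hq0 : ∀ k, 0 ≤ q k)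
    (hq1 : ∑ k, q k = 1) (hr : ∀ k, 0 < r k) (hr1 : ∑ k, r k = 1) :
    0 ≤ ∑ k, q k * Real.log (q k / r k) := by
  have h : ∑ k, (q k - q k * Real.log (q k / r k) - r k) ≤ 0 :=
    Finset.sum_nonpos fun k _ => gibbs_term_nonpos (hq0 k) (hr k)
  have : ∑ k, (q k - q k * Real.log (q k / r k) - r k)
      = 1 - (∑ k, q k * Real.log (q k / r k)) - 1 := by
    rw [Finset.sum_sub_distrib, Finset.sum_sub_distrib, hq1, hr1]
  linarith [this ▸ h]

/-- Equality case: KL(q‖r) ≤ 0 forces q = r. -/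
lemma gibbs_eq {K : ℕ} (q r : Fin K → ℝ) (hq0 : ∀ k, 0 ≤ q k)
    (hq1 : ∑ k, q k = 1) (hr : ∀ k, 0 < r k) (hr1 : ∑ k, r k = 1)
    (h : ∑ k, q k * Real.log (q k / r k) ≤ 0) : q = r := by
  have hS0 : ∑ k, q k * Real.log (q k / r k) = 0 :=
    le_antisymm h (gibbs_nonneg q r hq0 hq1 hr hr1)
  have hsum0 : ∑ k, (q k - q k * Real.log (q k / r k) - r k) = 0 := by
    rw [Finset.sum_sub_distrib, Finset.sum_sub_distrib, hq1, hr1, hS0]; ring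
  have hall : ∀ k ∈ Finset.univ, (q k - q k * Real.log (q k / r k) - r k) = 0 :=
    (Finset.sum_eq_zero_iff_of_nonpos
      (fun k _ => gibbs_term_nonpos (hq0 k) (hr k))).mp hsum0
  funext k
  have hk := hall k (Finset.mem_univ k)
  rcases eq_or_lt_of_le (hq0 k) with h0 | hqk
  · exfalso
    rw [← h0] at hk
    simp at hk
    exact (hr k).ne' hk
  · by_contra hne
    have hx : 0 < r k / q k := div_pos (hr k) hqk
    have hx1 : r k / q k ≠ 1 := by
      intro h1
      exact hne ((div_eq_one_iff_eq hqk.ne').mp h1).symm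
    have hlt := Real.log_lt_sub_one_of_pos hx hx1
    have h2 : q k * Real.log (r k / q k) < q k * (r k / q k - 1) :=
      (mul_lt_mul_iff_right₀ hqk).mpr hlt
    rw [Real.log_div (hr k).ne' hqk.ne'] at h2
    rw [Real.log_div hqk.ne' (hr k).ne'] at hk
    have h3 : q k * (r k / q k - 1) = r k - q k := by field_simp
    nlinarith [h2]

theorem tempered_is_info_projection {K : ℕ} (hK : 1 ≤ K) (p : Fin K → ℝ)
    (hpos : ∀ k, 0 < p k) (hsum : ∑ k, p k = 1)
    (βs : ℝ) (hβ : 0 ≤ βs)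
    (q : Fin K → ℝ) (hq0 : ∀ k, 0 ≤ q k) (hq1 : ∑ k, q k = 1)
    (hent : -∑ k, q k * Real.log (q k)
          = -∑ k, (p k ^ βs / ∑ j, p j ^ βs) * Real.log (p k ^ βs / ∑ j, p j ^ βs)) :
    ∑ k, (p k ^ βs / ∑ j, p j ^ βs) * Real.log ((p k ^ βs / ∑ j, p j ^ βs) / p k)
      ≤ ∑ k, q k * Real.log (q k / p k) := by
  have hKpos : 0 < K := hK
  haveI : Nonempty (Fin K) := Fin.pos_iff_nonempty.mp hKpos
  set Z : ℝ := ∑ j, p j ^ βs with hZdef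
  have hZ : 0 < Z :=
    Finset.sum_pos (fun j _ => Real.rpow_pos_of_pos (hpos j) βs) Finset.univ_nonempty
  set r : Fin K → ℝ := fun k => p k ^ βs / Z with hrdef
  have hrpos : ∀ k, 0 < r k := fun k => div_pos (Real.rpow_pos_of_pos (hpos k) βs) hZ
  have hr1 : ∑ k, r k = 1 := by
    rw [hrdef]
    rw [← Finset.sum_div, div_self hZ.ne']
  have hlogr : ∀ k, Real.log (r k) = βs * Real.log (p k) - Real.log Z := fun k => by
    rw [hrdef]
    rw [Real.log_div (Real.rpow_pos_of_pos (hpos k) βs).ne' hZ.ne',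
      Real.log_rpow (hpos k)]
  set A : ℝ := ∑ k, q k * Real.log (p k) with hA
  set B : ℝ := ∑ k, r k * Real.log (p k) with hB
  -- expansions
  have hqsplit : ∀ k, q k * Real.log (q k / r k)
      = q k * Real.log (q k) - βs * (q k * Real.log (p k)) + q k * Real.log Z := by
    intro k
    rcases eq_or_lt_of_le (hq0 k) with h0 | hqk
    · simp [← h0]
    · rw [Real.log_div hqk.ne' (hrpos k).ne', hlogr k]; ring
  have hS : ∑ k, q k * Real.log (q k / r k)
      = (∑ k, q k * Real.log (q k)) - βs * A + Real.log Z := by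
    rw [Finset.sum_congr rfl (fun k _ => hqsplit k)]
    rw [Finset.sum_add_distrib, Finset.sum_sub_distrib, ← Finset.mul_sum,
      ← Finset.sum_mul, hq1, one_mul]
  have hrlogr : ∑ k, r k * Real.log (r k) = βs * B - Real.log Z := by
    have : ∀ k, r k * Real.log (r k)
        = βs * (r k * Real.log (p k)) - r k * Real.log Z := fun k => by
      rw [hlogr k]; ring
    rw [Finset.sum_congr rfl (fun k _ => this k), Finset.sum_sub_distrib,
      ← Finset.mul_sum, ← Finset.sum_mul, hr1, one_mul]
  have hent' : ∑ k, q k * Real.log (q k) = ∑ k, r k * Real.log (r k) := by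
    have := neg_injective hent
    simpa [hrdef, hZdef] using this
  have hSval : ∑ k, q k * Real.log (q k / r k) = βs * (B - A) := by
    rw [hS, hent', hrlogr]; ring
  have hAB : A ≤ B := by
    rcases eq_or_lt_of_le hβ with hb0 | hbpos
    · -- βs = 0 : KL(q‖r) = 0 forces q = r
      have hqr : q = r := by
        apply gibbs_eq q r hq0 hq1 hrpos hr1
        rw [hSval, ← hb0]; ring_nf; exact le_refl 0
      rw [hA, hB, hqr]
    · have h0 := gibbs_nonneg q r hq0 hq1 hrpos hr1
      rw [hSval] at h0
      nlinarith [h0]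
  -- rewrite goal
  have hgoalL : ∑ k, r k * Real.log (r k / p k) = (∑ k, r k * Real.log (r k)) - B := by
    have : ∀ k, r k * Real.log (r k / p k)
        = r k * Real.log (r k) - r k * Real.log (p k) := fun k => by
      rw [Real.log_div (hrpos k).ne' (hpos k).ne']; ring
    rw [Finset.sum_congr rfl (fun k _ => this k), Finset.sum_sub_distrib]
  have hgoalR : ∑ k, q k * Real.log (q k / p k) = (∑ k, q k * Real.log (q k)) - A := by
    have : ∀ k, q k * Real.log (q k / p k)
        = q k * Real.log (q k) - q k * Real.log (p k) := fun k => by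
      rcases eq_or_lt_of_le (hq0 k) with h0 | hqk
      · simp [← h0]
      · rw [Real.log_div hqk.ne' (hpos k).ne']; ring
    rw [Finset.sum_congr rfl (fun k _ => this k), Finset.sum_sub_distrib]
  have key : ∑ k, r k * Real.log (r k / p k) ≤ ∑ k, q k * Real.log (q k / p k) := by
    rw [hgoalL, hgoalR, hent']
    linarith
  simpa [hrdef, hZdef] using key
end

section
/- Let W ∈ ℝ^{K×K} and b ∈ ℝ^K (K ≥ 2) be such that for every z ∈ ℝ^K, the set of indices maximising Wz + b equals the set of indices maximising z. Then there exist a ∈ ℝ^K, β > 0, and γ ∈ ℝ such that W = β I_K + 1_K aᵀ and b = γ 1_K, where 1_K is the all-ones vector. -/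
open Real Finset Matrix

theorem accuracy_preserving_linear_is_temperature {K : ℕ} (hK : 2 ≤ K)
    (W : Matrix (Fin K) (Fin K) ℝ) (b : Fin K → ℝ)
    (hinv : ∀ z : Fin K → ℝ,
      {i : Fin K | ∀ j, (W.mulVec z + b) j ≤ (W.mulVec z + b) i}
        = {i : Fin K | ∀ j, z j ≤ z i}) :
    ∃ (a : Fin K → ℝ) (β : ℝ) (γ : ℝ), 0 < β ∧
      (∀ i j, W i j = (if i = j then β else 0) + a j) ∧ (∀ i, b i = γ) := by
  have hK0 : 0 < K := by omega
  have hK1 : 1 < K := by omega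
  have key : ∀ (z : Fin K → ℝ) (i : Fin K), (∀ j, z j ≤ z i) →
      ∀ j, (W.mulVec z + b) j ≤ (W.mulVec z + b) i := by
    intro z i h
    exact (Set.ext_iff.mp (hinv z) i).mpr h
  have key2 : ∀ (z : Fin K → ℝ) (i : Fin K), ¬ (∀ j, z j ≤ z i) →
      ¬ ∀ j, (W.mulVec z + b) j ≤ (W.mulVec z + b) i := by
    intro z i h hc
    exact h ((Set.ext_iff.mp (hinv z) i).mp hc)
  -- b is constant
  have hb : ∀ i j, b i = b j := by
    intro i j
    have h1 := key 0 i (fun j => le_refl 0) j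
    have h2 := key 0 j (fun j => le_refl 0) i
    simp [Matrix.mulVec_zero] at h1 h2
    linarith
  -- strict diagonal dominance of each column
  have hdiag : ∀ i k : Fin K, i ≠ k → W i k < W k k := by
    intro i k hik
    have hmax : ∀ j, (Pi.single k 1 : Fin K → ℝ) j ≤ (Pi.single k 1 : Fin K → ℝ) k := by
      intro j
      by_cases h : j = k <;> simp [Pi.single_apply, h]
    have hub := key _ k hmax
    have hnot : ¬ ∀ j, (Pi.single k 1 : Fin K → ℝ) j ≤ (Pi.single k 1 : Fin K → ℝ) i := by
      push_neg
      refine ⟨k, ?_⟩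
      simp [Pi.single_apply, hik]
    have := key2 _ i hnot
    push_neg at this
    obtain ⟨j, hj⟩ := this
    have h1 : W j k + b j ≤ W k k + b k := by
      have := hub j; simpa [Matrix.mulVec_single] using this
    have h2 : W i k + b i < W j k + b j := by
      simpa [Matrix.mulVec_single] using hj
    have hbik := hb i k
    have hbjk := hb j k
    linarith
  -- pair equality
  have hpair : ∀ k l : Fin K, k ≠ l → W k k + W k l = W l k + W l l := by
    intro k l hkl
    set z : Fin K → ℝ := Pi.single k 1 + Pi.single l 1 with hz
    have hzval : ∀ j, z j = (if j = k then (1:ℝ) else 0) + (if j = l then 1 else 0) := by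
      intro j; simp [hz, Pi.single_apply]
    have hzk : z k = 1 := by rw [hzval]; simp [hkl]
    have hzl : z l = 1 := by rw [hzval]; simp [hkl.symm]
    have hle : ∀ j, z j ≤ 1 := by
      intro j; rw [hzval]
      by_cases h1 : j = k <;> by_cases h2 : j = l <;> simp_all
    have hWz : ∀ i, W.mulVec z i = W i k + W i l := by
      intro i; simp [hz, Matrix.mulVec_add, Matrix.mulVec_single]
    have h1 := key z k (fun j => hzk ▸ hle j) l
    have h2 := key z l (fun j => hzl ▸ hle j) k
    simp only [Pi.add_apply, hWz] at h1 h2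
    have hbkl := hb k l
    linarith
  -- triple equality
  have htriple : ∀ k l m : Fin K, k ≠ l → k ≠ m → l ≠ m →
      W k k + W k l + W k m = W l k + W l l + W l m := by
    intro k l m hkl hkm hlm
    set z : Fin K → ℝ := Pi.single k 1 + Pi.single l 1 + Pi.single m 1 with hz
    have hzval : ∀ j, z j = (if j = k then (1:ℝ) else 0) + (if j = l then 1 else 0)
        + (if j = m then 1 else 0) := by
      intro j; simp [hz, Pi.single_apply]
    have hzk : z k = 1 := by rw [hzval]; simp [hkl, hkm]
    have hzl : z l = 1 := by rw [hzval]; simp [hkl.symm, hlm]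
    have hle : ∀ j, z j ≤ 1 := by
      intro j; rw [hzval]
      by_cases h1 : j = k <;> by_cases h2 : j = l <;> by_cases h3 : j = m <;>
        simp_all
    have hWz : ∀ i, W.mulVec z i = W i k + W i l + W i m := by
      intro i; simp [hz, Matrix.mulVec_add, Matrix.mulVec_single]
    have h1 := key z k (fun j => hzk ▸ hle j) l
    have h2 := key z l (fun j => hzl ▸ hle j) k
    simp only [Pi.add_apply, hWz] at h1 h2
    have hbkl := hb k l
    linarith
  -- off-diagonal entries in a column are equal
  have hcol : ∀ i i' m : Fin K, i ≠ m → i' ≠ m → W i m = W i' m := by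
    intro i i' m him hi'm
    by_cases h : i = i'
    · rw [h]
    · have ht := htriple i i' m h him hi'm
      have hp := hpair i i' h
      linarith
  set e0 : Fin K := ⟨0, hK0⟩ with he0
  set e1 : Fin K := ⟨1, hK1⟩ with he1
  have h01 : e1 ≠ e0 := by simp [he0, he1, Fin.ext_iff]
  set a : Fin K → ℝ := fun j => W (if j = e0 then e1 else e0) j with ha
  have haval : ∀ i j : Fin K, i ≠ j → W i j = a j := by
    intro i j hij
    rw [ha]
    show W i j = W (if j = e0 then e1 else e0) j
    by_cases h : j = e0
    · rw [if_pos h]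
      exact hcol i e1 j hij (by rw [h]; exact h01)
    · rw [if_neg h]
      exact hcol i e0 j hij (fun hc => h hc.symm)
  set β : ℝ := W e0 e0 - a e0 with hβ
  have hae0 : a e0 = W e1 e0 := by simp [ha]
  have hβpos : 0 < β := by
    rw [hβ, hae0]
    have := hdiag e1 e0 h01
    linarith
  have hdiagval : ∀ j, W j j = β + a j := by
    intro j
    by_cases h : j = e0
    · subst h; rw [hβ]; ring
    · have hp := hpair j e0 h
      have h1 : W j e0 = a e0 := haval j e0 h
      have h2 : W e0 j = a j := haval e0 j (fun hc => h hc.symm)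
      rw [hβ]; linarith
  refine ⟨a, β, b e0, hβpos, ?_, fun i => hb i e0⟩
  intro i j
  by_cases h : i = j
  · subst h; simp [hdiagval i]
  · simp [h, haval i j h]
end
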